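/- Let p ∈ (0,1], λ, δ > 0 and h ∈ ℝ be such that Φ_p(λ,h) > λh + δ. Then for every ε ∈ (0,δ) there exists δ̃ > 0 such that for all sufficiently large m, ℙ[(1/m) log Z^0_{−m,0} < Φ_p(λ,h) − ε] ≤ exp{−δ̃ m}. -/

import Mathlib

/- A heteropolymer in a medium with random droplets (Wüthrich, Ann. Appl. Probab. 2006).

A path in `C^{k+m}_{k,x}` is encoded by its sequence of `m` increments: at each step every
one of the `d` coordinates changes by `±1`, so an increment is an element of `Fin d → Bool`
(`true` = `+1`, `false` = `-1`).  The uniform measure on paths corresponds to the uniform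
measure on step sequences, so expectations under `P^{k+m}_{k,x}` are normalized sums over
all step sequences. -/

open MeasureTheory Filter Real

namespace Hetero

variable (d : ℕ)

/-- Step sequences of length `m`. -/
abbrev Steps (m : ℕ) := Fin m → Fin d → Bool

/-- Position (in `ℤ^d`) after `j` steps of the walk started at `x`. -/
def pos (x : Fin d → ℤ) {m : ℕ} (s : Steps d m) (j : ℕ) : Fin d → ℤ :=
  fun c => x c + ∑ i ∈ Finset.range j,
    (if hi : i < m then (if s ⟨i, hi⟩ c then 1 else -1) else 0)

/-- `Δ_η(S_i)`: `-1` if the walk is at the origin (of `ℤ^d`) and there is a droplet there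
(`η_i = 1`), and `+1` otherwise. -/
noncomputable def del (et : ℤ → ℝ) (t : ℤ) (y : Fin d → ℤ) : ℝ :=
  if y = 0 ∧ et t = 1 then -1 else 1

/-- Energy `λ ∑_{i=k+1}^{k+m} Δ_η(S_i)(ω_i + h)` of the polymer started at time `k`
at site `x`, performing the `m` steps `s`. -/
noncomputable def ham (lam h : ℝ) (om et : ℤ → ℝ) (k : ℤ) (x : Fin d → ℤ) {m : ℕ}
    (s : Steps d m) : ℝ :=
  lam * ∑ j ∈ Finset.Icc 1 m, del d et (k + (j : ℤ)) (pos d x s j) * (om (k + (j : ℤ)) + h)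

/-- Partition sum `Z^{k+m}_{k,x}(ω,η)`. -/
noncomputable def Z (lam h : ℝ) (om et : ℤ → ℝ) (k : ℤ) (x : Fin d → ℤ) (m : ℕ) : ℝ :=
  (∑ s : Steps d m, Real.exp (ham d lam h om et k x s)) / 2 ^ (d * m)

/-- Restricted partition sum `Ẑ^{k+m}_{k,x}(ω,η)` (only paths ending at the origin). -/
noncomputable def Zhat (lam h : ℝ) (om et : ℤ → ℝ) (k : ℤ) (x : Fin d → ℤ) (m : ℕ) : ℝ :=
  (∑ s : Steps d m, Set.indicator {s : Steps d m | pos d x s m = 0}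
      (fun s => Real.exp (ham d lam h om et k x s)) s) / 2 ^ (d * m)

/-- `Ψ^{k+m}_{k,x}(ω,η) = E^{k+m}_{k,x}[exp{λ ∑ (Δ_η(S_i) - 1)(ω_i + h)}]`. -/
noncomputable def Psi (lam h : ℝ) (om et : ℤ → ℝ) (k : ℤ) (x : Fin d → ℤ) (m : ℕ) : ℝ :=
  (∑ s : Steps d m, Real.exp (lam * ∑ j ∈ Finset.Icc 1 m,
      (del d et (k + (j : ℤ)) (pos d x s j) - 1) * (om (k + (j : ℤ)) + h))) / 2 ^ (d * m)

/-- Quenched polymer probability `Q^{k+m}_{k,x}[A](ω,η)` of a path event `A`. -/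
noncomputable def Qprob (lam h : ℝ) (om et : ℤ → ℝ) (k : ℤ) (x : Fin d → ℤ) (m : ℕ)
    (A : Set (Steps d m)) : ℝ :=
  (∑ s : Steps d m, Set.indicator A (fun s => Real.exp (ham d lam h om et k x s)) s) /
    (∑ s : Steps d m, Real.exp (ham d lam h om et k x s))

/-- Simple-random-walk probability `P^{k+m}_{k,x}[A]` of a path event `A` (it does not
depend on `k` and `x`, which only shift the path). -/
noncomputable def Pprob (m : ℕ) (A : Set (Steps d m)) : ℝ :=
  (∑ s : Steps d m, Set.indicator A (fun _ => (1 : ℝ)) s) / 2 ^ (d * m)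

/-- Probability that the `m`-step walk started at the origin does not revisit the origin. -/
noncomputable def noReturn (m : ℕ) : ℝ :=
  Pprob d m {s : Steps d m | ∀ i, 1 ≤ i → i ≤ m → pos d 0 s i ≠ 0}

/-- `α(d) = P^∞_{0,0}[w(i) ≠ 0 for all i ≥ 1]`: the probability that the walk never
returns to the origin.  By continuity from above it is the (decreasing) limit, i.e. the
infimum, of the finite-horizon no-return probabilities. -/
noncomputable def alpha : ℝ := ⨅ m : ℕ, noReturn d m

/-- `N_m`: number of returns of the walk (started at the origin) to the origin in `(0, m]`. -/
def Nret (m : ℕ) (s : Steps d m) : ℕ :=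
  ((Finset.Icc 1 m).filter (fun i => pos d 0 s i = 0)).card

/-- Euclidean norm of a point of `ℤ^d`. -/
noncomputable def nrm (x : Fin d → ℤ) : ℝ := Real.sqrt (∑ c, ((x c : ℝ)) ^ 2)

end Hetero

/-
Changing one pair of signs `(ω_i, η_i)` changes the energy of every path by at most
`2λ(1 + |h|)`, hence changes `log Z^0_{-m,0}` by at most as much.  As a function of the `2m`
independent signs in the window `(-m, 0]`, `log Z^0_{-m,0}` therefore concentrates around its
mean (McDiarmid): a deviation of order `εm` has probability `exp(-cm)`.  By stationarity of the
disorder this mean is `𝔼 log Z^m_{0,0}`, and `(1/m) 𝔼 log Z^m_{0,0} → Φ` by bounded convergence,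
since `|log Z^m_{0,0}| ≤ λ(1 + |h|)m`.
-/

namespace Hetero

open Finset MeasureTheory ProbabilityTheory

section BoundedDifferences

variable {α : Type*}

def HasBoundedDifferences {m : ℕ} (c : ℝ) (F : (Fin m → α) → ℝ) : Prop :=
  ∀ (x y : Fin m → α) (j : Fin m), (∀ i, i ≠ j → x i = y i) → |F x - F y| ≤ c

variable (w : α → ℝ)

def cubeWeight {m : ℕ} (x : Fin m → α) : ℝ := ∏ j, w (x j)

variable {w} in
lemma cubeWeight_nonneg (hw₀ : ∀ a, 0 ≤ w a) {m : ℕ} (x : Fin m → α) : 0 ≤ cubeWeight w x :=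
  prod_nonneg fun j _ => hw₀ (x j)

variable [Fintype α]

def cubeMean {m : ℕ} (F : (Fin m → α) → ℝ) : ℝ := ∑ x, cubeWeight w x * F x

variable {w}

lemma cubeMean_succ {m : ℕ} (F : (Fin (m + 1) → α) → ℝ) :
    cubeMean w F = ∑ x : Fin m → α, cubeWeight w x * ∑ a, w a * F (Fin.cons a x) := by
  rw [cubeMean, ← (Fin.consEquiv fun _ => α).sum_comp, Fintype.sum_prod_type, sum_comm]
  refine sum_congr rfl fun x _ => ?_
  rw [mul_sum]
  refine sum_congr rfl fun a _ => ?_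
  show cubeWeight w (Fin.cons a x) * F (Fin.cons a x) = _
  simp only [cubeWeight, Fin.prod_univ_succ, Fin.cons_zero, Fin.cons_succ]
  ring

lemma abs_sum_mul_sub_sum_mul_le (hw₀ : ∀ a, 0 ≤ w a) (hw₁ : ∑ a, w a = 1) {c : ℝ}
    {g g' : α → ℝ} (hg : ∀ a, |g a - g' a| ≤ c) :
    |∑ a, w a * g a - ∑ a, w a * g' a| ≤ c :=
  calc |∑ a, w a * g a - ∑ a, w a * g' a| = |∑ a, w a * (g a - g' a)| := by
        simp only [mul_sub, sum_sub_distrib]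
    _ ≤ ∑ a, w a * |g a - g' a| := by
        refine (abs_sum_le_sum_abs _ _).trans_eq (sum_congr rfl fun a _ => ?_)
        rw [abs_mul, abs_of_nonneg (hw₀ a)]
    _ ≤ ∑ a, w a * c := sum_le_sum fun a _ => mul_le_mul_of_nonneg_left (hg a) (hw₀ a)
    _ = c := by rw [← sum_mul, hw₁, one_mul]

namespace HasBoundedDifferences

variable (hw₀ : ∀ a, 0 ≤ w a) (hw₁ : ∑ a, w a = 1) {m : ℕ} {c : ℝ}
  {F : (Fin (m + 1) → α) → ℝ}
include hw₀ hw₁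

lemma sum_mul_cons (hF : HasBoundedDifferences c F) :
    HasBoundedDifferences c fun x : Fin m → α => ∑ a, w a * F (Fin.cons a x) := by
  intro x y j hxy
  refine abs_sum_mul_sub_sum_mul_le hw₀ hw₁ fun a => hF _ _ j.succ fun i hi => ?_
  cases i using Fin.cases with
  | zero => rfl
  | succ i => exact hxy i fun hij => hi (hij ▸ rfl)

lemma abs_sum_mul_cons_sub_le (hF : HasBoundedDifferences c F) (x : Fin m → α) (a : α) :
    |∑ b, w b * F (Fin.cons b x) - F (Fin.cons a x)| ≤ c := by
  have hconst : F (Fin.cons a x) = ∑ b, w b * F (Fin.cons a x) := by rw [← sum_mul, hw₁, one_mul]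
  rw [hconst]
  refine abs_sum_mul_sub_sum_mul_le hw₀ hw₁ fun b => hF _ _ 0 fun i hi => ?_
  obtain ⟨i, rfl⟩ := Fin.exists_succ_eq.mpr hi
  rfl

end HasBoundedDifferences

lemma exp_mul_le_cosh_add_div_mul_sinh {c y : ℝ} (hc : 0 < c) (hy : |y| ≤ c) (s : ℝ) :
    exp (s * y) ≤ cosh (s * c) + y / c * sinh (s * c) := by
  obtain ⟨hy₁, hy₂⟩ := abs_le.mp hy
  set θ := (c - y) / (2 * c)
  have hθ : θ * (2 * c) = c - y := div_mul_cancel₀ _ (by positivity)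
  have hθ₀ : 0 ≤ θ := div_nonneg (by linarith) (by positivity)
  have hθ₁ : 0 ≤ 1 - θ := by
    rw [sub_nonneg, div_le_one (by positivity)]
    linarith
  have hconv := convexOn_exp.2 (Set.mem_univ (-(s * c))) (Set.mem_univ (s * c)) hθ₀ hθ₁
    (add_sub_cancel θ 1)
  have hsy : θ • -(s * c) + (1 - θ) • (s * c) = s * y := by
    simp only [smul_eq_mul]
    linear_combination (-s) * hθ
  have hyc : y / c = 1 - 2 * θ := by
    rw [div_eq_iff hc.ne']
    linear_combination hθ
  rw [hsy, smul_eq_mul, smul_eq_mul] at hconv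
  rw [cosh_eq, sinh_eq, hyc]
  linarith

lemma sum_mul_exp_le_cosh (hw₀ : ∀ a, 0 ≤ w a) (hw₁ : ∑ a, w a = 1) {c : ℝ} (hc : 0 < c)
    {Y : α → ℝ} (hY₀ : ∑ a, w a * Y a = 0) (hY : ∀ a, |Y a| ≤ c) (s : ℝ) :
    ∑ a, w a * exp (s * Y a) ≤ cosh (s * c) :=
  calc ∑ a, w a * exp (s * Y a)
      ≤ ∑ a, w a * (cosh (s * c) + Y a / c * sinh (s * c)) :=
        sum_le_sum fun a _ =>
          mul_le_mul_of_nonneg_left (exp_mul_le_cosh_add_div_mul_sinh hc (hY a) s) (hw₀ a)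
    _ = (∑ a, w a) * cosh (s * c) + (∑ a, w a * Y a) * (sinh (s * c) / c) := by
        rw [sum_mul, sum_mul, ← sum_add_distrib]
        exact sum_congr rfl fun a _ => by ring
    _ = cosh (s * c) := by rw [hw₁, hY₀]; ring

lemma cubeMean_exp_sub_le_cosh_pow (hw₀ : ∀ a, 0 ≤ w a) (hw₁ : ∑ a, w a = 1) {c : ℝ}
    (hc : 0 < c) (s : ℝ) :
    ∀ {m : ℕ} {F : (Fin m → α) → ℝ}, HasBoundedDifferences c F →
      cubeMean w (fun x => exp (s * (cubeMean w F - F x))) ≤ cosh (s * c) ^ m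
  | 0, F, _ => by simp [cubeMean, cubeWeight]
  | m + 1, F, hF => by
    set G : (Fin m → α) → ℝ := fun x => ∑ a, w a * F (Fin.cons a x)
    have hmean : cubeMean w F = cubeMean w G := cubeMean_succ F
    -- Integrating out the first coordinate is a one-step Hoeffding bound.
    have hcond : ∀ x, ∑ a, w a * exp (s * (G x - F (Fin.cons a x))) ≤ cosh (s * c) := by
      intro x
      refine sum_mul_exp_le_cosh hw₀ hw₁ hc ?_ (hF.abs_sum_mul_cons_sub_le hw₀ hw₁ x) s
      simp only [mul_sub, sum_sub_distrib, ← sum_mul, hw₁, one_mul, sub_self]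
    calc cubeMean w (fun x => exp (s * (cubeMean w F - F x)))
        = ∑ x, cubeWeight w x * (exp (s * (cubeMean w G - G x)) *
            ∑ a, w a * exp (s * (G x - F (Fin.cons a x)))) := by
          rw [cubeMean_succ _, hmean]
          refine sum_congr rfl fun x _ => ?_
          congr 1
          rw [mul_sum]
          refine sum_congr rfl fun a _ => ?_
          rw [mul_left_comm, ← exp_add]
          ring_nf
      _ ≤ ∑ x, cubeWeight w x * (exp (s * (cubeMean w G - G x)) * cosh (s * c)) :=
          sum_le_sum fun x _ => mul_le_mul_of_nonneg_left
            (mul_le_mul_of_nonneg_left (hcond x) (exp_nonneg _)) (cubeWeight_nonneg hw₀ x)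
      _ = cosh (s * c) * cubeMean w (fun x => exp (s * (cubeMean w G - G x))) := by
          simp only [cubeMean, mul_sum]
          exact sum_congr rfl fun x _ => by ring
      _ ≤ cosh (s * c) * cosh (s * c) ^ m :=
          mul_le_mul_of_nonneg_left
            (cubeMean_exp_sub_le_cosh_pow hw₀ hw₁ hc s (hF.sum_mul_cons hw₀ hw₁))
            (cosh_pos _).le
      _ = cosh (s * c) ^ (m + 1) := by ring

/-- **McDiarmid's inequality** for a product of finitely supported weights. -/
theorem sum_cubeWeight_le_sub_le_exp (hw₀ : ∀ a, 0 ≤ w a) (hw₁ : ∑ a, w a = 1) {c : ℝ}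
    (hc : 0 < c) {m : ℕ} (hm : 0 < m) {F : (Fin m → α) → ℝ} (hF : HasBoundedDifferences c F)
    {t : ℝ} (ht : 0 ≤ t) :
    ∑ x ∈ univ.filter (fun x => F x ≤ cubeMean w F - t), cubeWeight w x ≤
      exp (-t ^ 2 / (2 * m * c ^ 2)) := by
  set s := t / (m * c ^ 2) with hs_def
  have hs : 0 ≤ s := by positivity
  have hchernoff : ∀ x ∈ univ.filter (fun x => F x ≤ cubeMean w F - t),
      cubeWeight w x ≤ cubeWeight w x * (exp (-(s * t)) * exp (s * (cubeMean w F - F x))) := by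
    intro x hx
    have hx : t ≤ cubeMean w F - F x := by linarith [(mem_filter.mp hx).2]
    refine le_mul_of_one_le_right (cubeWeight_nonneg hw₀ x) ?_
    rw [← exp_add, one_le_exp_iff]
    nlinarith
  calc ∑ x ∈ univ.filter (fun x => F x ≤ cubeMean w F - t), cubeWeight w x
      ≤ ∑ x ∈ univ.filter (fun x => F x ≤ cubeMean w F - t),
          cubeWeight w x * (exp (-(s * t)) * exp (s * (cubeMean w F - F x))) :=
        sum_le_sum hchernoff
    _ ≤ ∑ x, cubeWeight w x * (exp (-(s * t)) * exp (s * (cubeMean w F - F x))) :=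
        sum_le_sum_of_subset_of_nonneg (filter_subset _ _) fun x _ _ =>
          mul_nonneg (cubeWeight_nonneg hw₀ x) (by positivity)
    _ = exp (-(s * t)) * cubeMean w (fun x => exp (s * (cubeMean w F - F x))) := by
        simp only [cubeMean, mul_sum]
        exact sum_congr rfl fun x _ => by ring
    _ ≤ exp (-(s * t)) * exp ((s * c) ^ 2 / 2) ^ m :=
        mul_le_mul_of_nonneg_left ((cubeMean_exp_sub_le_cosh_pow hw₀ hw₁ hc s hF).trans
          (pow_le_pow_left₀ (cosh_pos _).le (cosh_le_exp_half_sq _) m)) (exp_nonneg _)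
    _ = exp (-t ^ 2 / (2 * m * c ^ 2)) := by
        rw [← exp_nat_mul, ← exp_add, hs_def]
        congr 1
        field_simp
        ring

end BoundedDifferences

section LogMeanExp

variable {ι : Type*} [Fintype ι] [Nonempty ι] {f g : ι → ℝ} {c : ℝ}

noncomputable def logMeanExp (f : ι → ℝ) : ℝ := log ((∑ i, exp (f i)) / Fintype.card ι)

lemma logMeanExp_le_add (hfg : ∀ i, f i ≤ g i + c) : logMeanExp f ≤ logMeanExp g + c := by
  have hmean : 0 < (∑ i, exp (g i)) / Fintype.card ι :=
    div_pos (sum_pos (fun i _ => exp_pos _) univ_nonempty) (by exact_mod_cast Fintype.card_pos)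
  rw [logMeanExp, logMeanExp, ← log_exp c, ← log_mul hmean.ne' (exp_pos c).ne']
  refine log_le_log (by positivity) ?_
  rw [div_mul_eq_mul_div, sum_mul]
  gcongr with i
  rw [← exp_add]
  exact exp_le_exp.mpr (hfg i)

lemma abs_logMeanExp_sub_le (hfg : ∀ i, |f i - g i| ≤ c) :
    |logMeanExp f - logMeanExp g| ≤ c := by
  have h₁ := logMeanExp_le_add (f := f) (g := g) (c := c) fun i => by
    linarith [(abs_le.mp (hfg i)).2]
  have h₂ := logMeanExp_le_add (f := g) (g := f) (c := c) fun i => by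
    linarith [(abs_le.mp (hfg i)).1]
  rw [abs_le]
  constructor <;> linarith

lemma abs_logMeanExp_le (hf : ∀ i, |f i| ≤ c) : |logMeanExp f| ≤ c := by
  have h0 : logMeanExp (fun _ : ι => (0 : ℝ)) = 0 := by
    simp [logMeanExp, Fintype.card_ne_zero]
  have := abs_logMeanExp_sub_le (f := f) (g := fun _ => 0) (by simpa using hf)
  rwa [h0, sub_zero] at this

end LogMeanExp

section PartitionFunction

variable {d : ℕ} {lam h : ℝ}

lemma log_Z_eq_logMeanExp (om et : ℤ → ℝ) (k : ℤ) (x : Fin d → ℤ) (m : ℕ) :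
    log (Z d lam h om et k x m) = logMeanExp (ham (m := m) d lam h om et k x) := by
  simp [Z, logMeanExp, pow_mul]

lemma abs_del_mul_le (et : ℤ → ℝ) (t : ℤ) (y : Fin d → ℤ) {o : ℝ} (ho : |o| ≤ 1) (h : ℝ) :
    |del d et t y * (o + h)| ≤ 1 + |h| := by
  have hdel : |del d et t y| = 1 := by
    rw [del]
    split <;> simp
  rw [abs_mul, hdel, one_mul]
  exact (abs_add_le o h).trans (by linarith)

lemma abs_ham_le {om : ℤ → ℝ} (hom : ∀ t, |om t| ≤ 1) (et : ℤ → ℝ) (k : ℤ) (x : Fin d → ℤ)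
    {m : ℕ} (s : Steps d m) :
    |ham d lam h om et k x s| ≤ |lam| * (1 + |h|) * m := by
  rw [ham, abs_mul, mul_assoc]
  gcongr
  calc _ ≤ ∑ j ∈ Icc 1 m, |del d et (k + j) (pos d x s j) * (om (k + j) + h)| :=
        abs_sum_le_sum_abs _ _
    _ ≤ ∑ j ∈ Icc 1 m, (1 + |h|) := sum_le_sum fun j _ => abs_del_mul_le et _ _ (hom _) h
    _ = (1 + |h|) * m := by
        simp only [sum_const, Nat.card_Icc, add_tsub_cancel_right, nsmul_eq_mul]
        ring

lemma abs_ham_sub_ham_le {om et om' et' : ℤ → ℝ} (hom : ∀ t, |om t| ≤ 1)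
    (hom' : ∀ t, |om' t| ≤ 1) {k : ℤ} {m j₀ : ℕ} (hj₀ : j₀ ∈ Icc 1 m)
    (hagree : ∀ j, j ≠ j₀ → om (k + j) = om' (k + j) ∧ et (k + j) = et' (k + j))
    (x : Fin d → ℤ) (s : Steps d m) :
    |ham d lam h om et k x s - ham d lam h om' et' k x s| ≤ 2 * |lam| * (1 + |h|) := by
  have hsingle : ∀ j ∈ Icc 1 m, j ≠ j₀ →
      del d et (k + j) (pos d x s j) * (om (k + j) + h) -
        del d et' (k + j) (pos d x s j) * (om' (k + j) + h) = 0 := fun j _ hj => by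
    rw [del, del, (hagree j hj).1, (hagree j hj).2, sub_self]
  rw [ham, ham, ← mul_sub, ← sum_sub_distrib, sum_eq_single_of_mem j₀ hj₀ hsingle, abs_mul,
    mul_assoc, mul_left_comm]
  gcongr
  refine (abs_sub _ _).trans ?_
  linarith [abs_del_mul_le et (k + j₀) (pos d x s j₀) (hom (k + j₀)) h,
    abs_del_mul_le et' (k + j₀) (pos d x s j₀) (hom' (k + j₀)) h]

lemma ham_congr {om et om' et' : ℤ → ℝ} {k k' : ℤ} {m : ℕ}
    (hagree : ∀ j ∈ Icc 1 m, om (k + j) = om' (k' + j) ∧ et (k + j) = et' (k' + j))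
    (x : Fin d → ℤ) (s : Steps d m) :
    ham d lam h om et k x s = ham d lam h om' et' k' x s := by
  rw [ham, ham]
  congr 1
  refine sum_congr rfl fun j hj => ?_
  rw [del, del, (hagree j hj).1, (hagree j hj).2]

def boolSign (b : Bool) : ℝ := if b then 1 else -1

lemma abs_boolSign (b : Bool) : |boolSign b| = 1 := by
  cases b <;> simp [boolSign]

lemma decide_eq_iff_eq_boolSign {r : ℝ} (hr : r = 1 ∨ r = -1) (b : Bool) :
    decide (r = 1) = b ↔ r = boolSign b := by
  rcases hr with rfl | rfl <;> cases b <;> norm_num [boolSign]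

noncomputable def windowSigns {m : ℕ} (x : Fin m → Bool) (t : ℤ) : ℝ :=
  if ht : 0 < t ∧ t ≤ m then boolSign (x ⟨(t - 1).toNat, by omega⟩) else 1

lemma abs_windowSigns_le {m : ℕ} (x : Fin m → Bool) (t : ℤ) : |windowSigns x t| ≤ 1 := by
  rw [windowSigns]
  split
  · rw [abs_boolSign]
  · simp

lemma windowSigns_natCast {m : ℕ} (x : Fin m → Bool) {j : ℕ} (hj : j ∈ Icc 1 m) :
    windowSigns x j = boolSign (x ⟨j - 1, by grind⟩) := by
  rw [mem_Icc] at hj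
  rw [windowSigns, dif_pos (by omega)]
  congr 3
  omega

lemma windowSigns_eq_of_eq_off {m : ℕ} {x y : Fin m → Bool} {i₀ : Fin m}
    (hxy : ∀ i, i ≠ i₀ → x i = y i) {t : ℤ} (ht : t ≠ i₀ + 1) :
    windowSigns x t = windowSigns y t := by
  unfold windowSigns
  split
  · rw [hxy _ fun hi => ht (by rw [← hi, Fin.val_mk]; omega)]
  · rfl

/-- `log Z^m_{0,0}` as a function of the signs `(ω_j, η_j)_{j = 1, …, m}`. -/
noncomputable def logZOfSigns (d : ℕ) (lam h : ℝ) (m : ℕ) (x : Fin m → Bool × Bool) : ℝ :=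
  log (Z d lam h (windowSigns fun j => (x j).1) (windowSigns fun j => (x j).2) 0 0 m)

lemma abs_logZOfSigns_le (m : ℕ) (x : Fin m → Bool × Bool) :
    |logZOfSigns d lam h m x| ≤ |lam| * (1 + |h|) * m := by
  rw [logZOfSigns, log_Z_eq_logMeanExp]
  exact abs_logMeanExp_le (abs_ham_le (abs_windowSigns_le _) _ _ _)

lemma hasBoundedDifferences_logZOfSigns (m : ℕ) :
    HasBoundedDifferences (2 * |lam| * (1 + |h|)) (logZOfSigns d lam h m) := by
  intro x y i₀ hxy
  simp only [logZOfSigns, log_Z_eq_logMeanExp]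
  refine abs_logMeanExp_sub_le (abs_ham_sub_ham_le (abs_windowSigns_le _) (abs_windowSigns_le _)
    (j₀ := i₀ + 1) (by simp) (fun j hj => ?_) 0)
  have ht : (0 : ℤ) + j ≠ i₀ + 1 := by omega
  exact ⟨windowSigns_eq_of_eq_off (fun i hi => congrArg Prod.fst (hxy i hi)) ht,
    windowSigns_eq_of_eq_off (fun i hi => congrArg Prod.snd (hxy i hi)) ht⟩

section Disorder

variable {Ω : Type*} [MeasurableSpace Ω] {μ : Measure Ω}

structure IsSignDisorder (μ : Measure Ω) (om et : ℤ → Ω → ℝ) (p : ℝ) : Prop where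
  measurable_om : ∀ i, Measurable (om i)
  measurable_et : ∀ i, Measurable (et i)
  om_sign : ∀ i a, om i a = 1 ∨ om i a = -1
  et_sign : ∀ i a, et i a = 1 ∨ et i a = -1
  measure_om : ∀ i, μ {a | om i a = 1} = ENNReal.ofReal (1 / 2)
  measure_et : ∀ i, μ {a | et i a = 1} = ENNReal.ofReal p
  iIndepFun : iIndepFun (Sum.elim om et) μ

def bernoulliWeight (q : ℝ) (b : Bool) : ℝ := if b then q else 1 - q

noncomputable def signWeight (p : ℝ) (b : Bool × Bool) : ℝ :=
  bernoulliWeight (1 / 2) b.1 * bernoulliWeight p b.2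

lemma signWeight_nonneg {p : ℝ} (hp : p ∈ Set.Icc 0 1) (b : Bool × Bool) :
    0 ≤ signWeight p b := by
  obtain ⟨hp₀, hp₁⟩ := hp
  rcases b with ⟨_ | _, _ | _⟩ <;> norm_num [signWeight, bernoulliWeight] <;> linarith

lemma sum_signWeight (p : ℝ) : ∑ b, signWeight p b = 1 := by
  simp [Fintype.sum_prod_type, signWeight, bernoulliWeight]
  ring

lemma measure_eq_boolSign [IsProbabilityMeasure μ] {f : Ω → ℝ} (hf : Measurable f)
    (hsign : ∀ a, f a = 1 ∨ f a = -1) {q : ℝ} (hq : 0 ≤ q)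
    (hq₁ : μ {a | f a = 1} = ENNReal.ofReal q) (b : Bool) :
    μ (f ⁻¹' {boolSign b}) = ENNReal.ofReal (bernoulliWeight q b) := by
  cases b
  · have hcompl : f ⁻¹' {boolSign false} = {a | f a = 1}ᶜ := by
      ext a
      rcases hsign a with ha | ha <;> norm_num [boolSign, ha]
    have hmeas : MeasurableSet {a | f a = 1} := hf (measurableSet_singleton 1)
    rw [hcompl, prob_compl_eq_one_sub hmeas, hq₁, bernoulliWeight,
      if_neg Bool.false_ne_true, ENNReal.ofReal_sub _ hq, ENNReal.ofReal_one]
  · simp only [boolSign, bernoulliWeight, if_true]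
    exact hq₁

lemma measurable_decide_eq {f : Ω → ℝ} (hf : Measurable f) (r : ℝ) :
    Measurable fun a => decide (f a = r) :=
  measurable_to_bool (by convert hf (measurableSet_singleton r) using 1; ext; simp)

/-- The signs `(ω_i, η_i)` at the times `i = k + 1, …, k + m`. -/
noncomputable def window (om et : ℤ → Ω → ℝ) (k : ℤ) (m : ℕ) (a : Ω) : Fin m → Bool × Bool :=
  fun j => (decide (om (k + j + 1) a = 1), decide (et (k + j + 1) a = 1))

namespace IsSignDisorder

variable {om et : ℤ → Ω → ℝ} {p : ℝ} (hdis : IsSignDisorder μ om et p)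
include hdis

lemma log_Z_eq_logZOfSigns_window (k : ℤ) (m : ℕ) (a : Ω) :
    log (Z d lam h (fun i => om i a) (fun i => et i a) k 0 m) =
      logZOfSigns d lam h m (window om et k m a) := by
  rw [logZOfSigns, log_Z_eq_logMeanExp, log_Z_eq_logMeanExp]
  congr 1
  funext s
  refine ham_congr (fun j hj => ?_) 0 s
  have hidx : k + ((j - 1 : ℕ) : ℤ) + 1 = k + j := by
    rw [mem_Icc] at hj
    omega
  rw [zero_add, windowSigns_natCast _ hj, windowSigns_natCast _ hj]
  simp only [window, hidx]
  exact ⟨(decide_eq_iff_eq_boolSign (hdis.om_sign _ a) _).mp rfl,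
    (decide_eq_iff_eq_boolSign (hdis.et_sign _ a) _).mp rfl⟩

lemma measurable_window (k : ℤ) (m : ℕ) : Measurable (window om et k m) :=
  measurable_pi_lambda _ fun _ =>
    (measurable_decide_eq (hdis.measurable_om _) 1).prodMk
      (measurable_decide_eq (hdis.measurable_et _) 1)

lemma measure_window_preimage_singleton [IsProbabilityMeasure μ] (hp : p ∈ Set.Icc 0 1)
    (k : ℤ) (m : ℕ) (x : Fin m → Bool × Bool) :
    μ (window om et k m ⁻¹' {x}) = ENNReal.ofReal (cubeWeight (signWeight p) x) := by
  have htime : Function.Injective fun j : Fin m => k + j + 1 := fun _ _ hj =>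
    Fin.ext (by simpa using hj)
  set g : Fin m ⊕ Fin m → ℤ ⊕ ℤ := Sum.map (fun j => k + j + 1) (fun j => k + j + 1)
  have hg : g.Injective := Sum.map_injective.mpr ⟨htime, htime⟩
  set sets : Fin m ⊕ Fin m → Set ℝ :=
    Sum.elim (fun j => {boolSign (x j).1}) (fun j => {boolSign (x j).2})
  have hfiber : window om et k m ⁻¹' {x} = ⋂ i ∈ univ, Sum.elim om et (g i) ⁻¹' sets i := by
    ext a
    simp [window, funext_iff, Prod.ext_iff, forall_and, g, sets,
      decide_eq_iff_eq_boolSign (hdis.om_sign _ a), decide_eq_iff_eq_boolSign (hdis.et_sign _ a)]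
  rw [hfiber, (hdis.iIndepFun.precomp hg).measure_inter_preimage_eq_mul _
    fun i _ => by cases i <;> exact measurableSet_singleton _, Fintype.prod_sum_type]
  simp only [g, sets, Sum.map_inl, Sum.map_inr, Sum.elim_inl, Sum.elim_inr]
  rw [cubeWeight, ENNReal.ofReal_prod_of_nonneg fun j _ => signWeight_nonneg hp (x j),
    ← prod_mul_distrib]
  refine prod_congr rfl fun j _ => ?_
  rw [measure_eq_boolSign (hdis.measurable_om _) (hdis.om_sign _) (by norm_num)
      (hdis.measure_om _),
    measure_eq_boolSign (hdis.measurable_et _) (hdis.et_sign _) hp.1 (hdis.measure_et _),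
    signWeight, ENNReal.ofReal_mul (by cases (x j).1 <;> norm_num [bernoulliWeight])]

lemma measure_window_preimage [IsProbabilityMeasure μ] (hp : p ∈ Set.Icc 0 1) (k : ℤ) (m : ℕ)
    (T : Finset (Fin m → Bool × Bool)) :
    μ (window om et k m ⁻¹' T) = ENNReal.ofReal (∑ x ∈ T, cubeWeight (signWeight p) x) := by
  rw [← sum_measure_preimage_singleton T fun x _ =>
      hdis.measurable_window k m (measurableSet_singleton x),
    ENNReal.ofReal_sum_of_nonneg fun x _ => cubeWeight_nonneg (signWeight_nonneg hp) x]
  exact sum_congr rfl fun x _ => hdis.measure_window_preimage_singleton hp k m x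

lemma integral_comp_window [IsProbabilityMeasure μ] (hp : p ∈ Set.Icc 0 1) (k : ℤ) (m : ℕ)
    (F : (Fin m → Bool × Bool) → ℝ) :
    ∫ a, F (window om et k m a) ∂μ = cubeMean (signWeight p) F := by
  rw [← integral_map (hdis.measurable_window k m).aemeasurable
      (measurable_of_countable F).aestronglyMeasurable, integral_fintype .of_finite]
  refine sum_congr rfl fun x _ => ?_
  rw [measureReal_def, Measure.map_apply (hdis.measurable_window k m) (measurableSet_singleton x),
    hdis.measure_window_preimage_singleton hp, ENNReal.toReal_ofReal
      (cubeWeight_nonneg (signWeight_nonneg hp) x), smul_eq_mul]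

lemma tendsto_cubeMean_logZOfSigns [IsProbabilityMeasure μ] (hp : p ∈ Set.Icc 0 1) {Φ : ℝ}
    (hΦ : ∀ᵐ a ∂μ, Tendsto (fun n : ℕ => (1 / n : ℝ) *
      log (Z d lam h (fun i => om i a) (fun i => et i a) 0 0 n)) atTop (nhds Φ)) :
    Tendsto (fun n : ℕ => (1 / n : ℝ) * cubeMean (signWeight p) (logZOfSigns d lam h n))
      atTop (nhds Φ) := by
  have hbound : ∀ n (x : Fin n → Bool × Bool),
      ‖(1 / n : ℝ) * logZOfSigns d lam h n x‖ ≤ |lam| * (1 + |h|) := by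
    intro n x
    rcases n.eq_zero_or_pos with rfl | hn
    · simp only [CharP.cast_eq_zero, div_zero, zero_mul, norm_zero]
      positivity
    rw [norm_mul, norm_div, norm_one, Real.norm_natCast, Real.norm_eq_abs, one_div,
      inv_mul_le_iff₀ (by exact_mod_cast hn), mul_comm]
    exact abs_logZOfSigns_le n x
  have hlim := tendsto_integral_of_dominated_convergence (μ := μ) (f := fun _ => Φ)
    (F := fun n a => (1 / n : ℝ) * logZOfSigns d lam h n (window om et 0 n a))
    (fun _ => |lam| * (1 + |h|))
    (fun n => ((measurable_of_countable (logZOfSigns d lam h n)).comp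
      (hdis.measurable_window 0 n)).aestronglyMeasurable.const_mul _) (integrable_const _)
    (fun n => ae_of_all _ fun a => hbound n _)
    (hΦ.mono fun a ha => by simpa only [hdis.log_Z_eq_logZOfSigns_window] using ha)
  simpa only [integral_const_mul, hdis.integral_comp_window hp, integral_const, probReal_univ,
    one_smul] using hlim

lemma measure_log_Z_le_sub_le [IsProbabilityMeasure μ] (hp : p ∈ Set.Icc 0 1) (hlam : lam ≠ 0)
    (k : ℤ) {m : ℕ} (hm : 0 < m) {t : ℝ} (ht : 0 ≤ t) :
    μ {a | log (Z d lam h (fun i => om i a) (fun i => et i a) k 0 m) ≤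
        cubeMean (signWeight p) (logZOfSigns d lam h m) - t} ≤
      ENNReal.ofReal (exp (-t ^ 2 / (2 * m * (2 * |lam| * (1 + |h|)) ^ 2))) := by
  have hset : {a | log (Z d lam h (fun i => om i a) (fun i => et i a) k 0 m) ≤
      cubeMean (signWeight p) (logZOfSigns d lam h m) - t} = window om et k m ⁻¹'
        ↑(univ.filter fun x => logZOfSigns d lam h m x ≤
          cubeMean (signWeight p) (logZOfSigns d lam h m) - t) := by
    ext a
    simp [hdis.log_Z_eq_logZOfSigns_window]
  rw [hset, hdis.measure_window_preimage hp]
  exact ENNReal.ofReal_le_ofReal (sum_cubeWeight_le_sub_le_exp (signWeight_nonneg hp)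
    (sum_signWeight p) (by positivity) hm (hasBoundedDifferences_logZOfSigns m) ht)

end IsSignDisorder

end Disorder

end PartitionFunction

theorem localized_large_deviation_general
    (d : ℕ) (lam h p δ : ℝ) (hlam : 0 < lam)
    (hp : p ∈ Set.Ioc (0:ℝ) 1)
    {Ω : Type*} [MeasurableSpace Ω] (μ : MeasureTheory.Measure Ω) [MeasureTheory.IsProbabilityMeasure μ]
    (om et : ℤ → Ω → ℝ)
    (hom_meas : ∀ i, Measurable (om i)) (het_meas : ∀ i, Measurable (et i))
    (hom_val : ∀ i a, om i a = 1 ∨ om i a = -1)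
    (het_val : ∀ i a, et i a = 1 ∨ et i a = -1)
    (hom_dist : ∀ i, μ {a | om i a = 1} = ENNReal.ofReal (1/2))
    (het_dist : ∀ i, μ {a | et i a = 1} = ENNReal.ofReal p)
    (hindep : ProbabilityTheory.iIndepFun
      (Sum.elim om et) μ)
    (Φ : ℝ)
    (hΦ : ∀ᵐ a ∂μ, Tendsto
      (fun n : ℕ => (1 / n : ℝ) * Real.log (Z d lam h (fun i => om i a) (fun i => et i a) 0 0 n))
      atTop (nhds Φ)) :
    ∀ ε : ℝ, 0 < ε → ε < δ → ∃ δt : ℝ, 0 < δt ∧ ∃ M : ℕ, ∀ m : ℕ, M ≤ m →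
      μ {a | (1 / m : ℝ) *
          Real.log (Z d lam h (fun i => om i a) (fun i => et i a) (-(m : ℤ)) 0 m) < Φ - ε} ≤
        ENNReal.ofReal (Real.exp (-δt * m)) := by
  intro ε hε _
  have hdis : IsSignDisorder μ om et p :=
    ⟨hom_meas, het_meas, hom_val, het_val, hom_dist, het_dist, hindep⟩
  have hp' : p ∈ Set.Icc 0 1 := Set.Ioc_subset_Icc_self hp
  set c := 2 * |lam| * (1 + |h|)
  obtain ⟨M, hM⟩ := eventually_atTop.mp ((hdis.tendsto_cubeMean_logZOfSigns hp' hΦ).eventually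
    (lt_mem_nhds (by linarith : Φ - ε / 2 < Φ)))
  refine ⟨ε ^ 2 / (8 * c ^ 2), by positivity, max M 1, fun m hm => ?_⟩
  have hm₀ : 0 < m := by omega
  have hm₀' : (0 : ℝ) < m := by exact_mod_cast hm₀
  have hmean := hM m (le_of_max_le_left hm)
  rw [one_div, lt_inv_mul_iff₀ hm₀'] at hmean
  calc _ ≤ μ {a | log (Z d lam h (fun i => om i a) (fun i => et i a) (-(m : ℤ)) 0 m) ≤
          cubeMean (signWeight p) (logZOfSigns d lam h m) - ε / 2 * m} :=
        measure_mono fun a ha => by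
          simp only [Set.mem_ofPred_eq, one_div, inv_mul_lt_iff₀ hm₀'] at ha ⊢
          linarith
    _ ≤ ENNReal.ofReal (exp (-(ε / 2 * m) ^ 2 / (2 * m * c ^ 2))) :=
        hdis.measure_log_Z_le_sub_le hp' hlam.ne' _ hm₀ (by positivity)
    _ = ENNReal.ofReal (exp (-(ε ^ 2 / (8 * c ^ 2)) * m)) := by
        congr 2
        field_simp
        ring

/-- **Lemma 4.1.** Let `p ∈ (0,1]`, `λ, δ > 0` and `h ∈ ℝ` with `Φ_p(λ,h) > λh + δ`.
Then for every `ε ∈ (0,δ)` there is `δ̃ > 0` such that for all large `m`,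
`ℙ[(1/m) log Z^0_{-m,0} < Φ_p(λ,h) - ε] ≤ exp{-δ̃ m}`.  Here `Φ` denotes the
deterministic free energy `Φ_p(λ,h) = lim (1/n) log Z^n_{0,0}`. -/
theorem localized_large_deviation
    (d : ℕ) (hd : 1 ≤ d) (lam h p δ : ℝ) (hlam : 0 < lam) (hδ : 0 < δ)
    (hp : p ∈ Set.Ioc (0:ℝ) 1)
    {Ω : Type*} [MeasurableSpace Ω] (μ : MeasureTheory.Measure Ω) [MeasureTheory.IsProbabilityMeasure μ]
    (om et : ℤ → Ω → ℝ)
    (hom_meas : ∀ i, Measurable (om i)) (het_meas : ∀ i, Measurable (et i))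
    (hom_val : ∀ i a, om i a = 1 ∨ om i a = -1)
    (het_val : ∀ i a, et i a = 1 ∨ et i a = -1)
    (hom_dist : ∀ i, μ {a | om i a = 1} = ENNReal.ofReal (1/2))
    (het_dist : ∀ i, μ {a | et i a = 1} = ENNReal.ofReal p)
    (hindep : ProbabilityTheory.iIndepFun
      (Sum.elim om et) μ)
    (Φ : ℝ)
    (hΦ : ∀ᵐ a ∂μ, Tendsto
      (fun n : ℕ => (1 / n : ℝ) * Real.log (Z d lam h (fun i => om i a) (fun i => et i a) 0 0 n))
      atTop (nhds Φ))
    (hloc : lam * h + δ < Φ) :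
    ∀ ε : ℝ, 0 < ε → ε < δ → ∃ δt : ℝ, 0 < δt ∧ ∃ M : ℕ, ∀ m : ℕ, M ≤ m →
      μ {a | (1 / m : ℝ) *
          Real.log (Z d lam h (fun i => om i a) (fun i => et i a) (-(m : ℤ)) 0 m) < Φ - ε} ≤
        ENNReal.ofReal (Real.exp (-δt * m)) :=
  localized_large_deviation_general d lam h p δ hlam hp μ om et hom_meas het_meas hom_val het_val
    hom_dist het_dist hindep Φ hΦ

end Hetero
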